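/- arXiv:2503.20071 — 6 statements merged into one kernel-verified Lean document; each statement's English description precedes it below -/
import Mathlib

section
/- Suppose A is an n × m matrix over a field (or more generally with entries in a domain, working in its fraction field), and the linear system Ax = b has a solution. Then there exists a solution x where each coordinate x_i is either 0 or of the form det(M_i)/det(N), where M_i and N are square submatrices (minors) of the augmented matrix [A | b]. -/
/-!
Choose columns of `A` forming a basis of its column space; since `b` lies in that space it is
a combination `∑ c_l a_{j_l}` of them. The chosen `k` columns have rank `k`, so some `k` of
their rows form an invertible minor `N`, and `N c = b` restricted to those rows. Cramer's rule
gives `c_l = det N_l / det N`, where `N_l` is `N` with its `l`-th column replaced by `b`; both are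
minors of `[A | b]`. Extending `c` by zero off the chosen columns gives the solution.
-/

/-- The augmented matrix `[A | b]`. -/
noncomputable def augMat {K : Type*} [Field K] {n m : ℕ}
    (A : Matrix (Fin n) (Fin m) K) (b : Fin n → K) : Matrix (Fin n) (Fin (m + 1)) K :=
  Matrix.of fun p (q : Fin (m + 1)) => if h : (q : ℕ) < m then A p ⟨q, h⟩ else b p

open Function Matrix

theorem Function.Injective.update_of_notMem_range {α β : Type*} [DecidableEq α] {f : α → β}
    (hf : Injective f) {b : β} (hb : b ∉ Set.range f) (a : α) : Injective (update f a b) := by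
  intro i j h
  by_cases hi : i = a <;> by_cases hj : j = a <;>
    simp only [update_apply, hi, hj, if_true, if_false] at h
  · exact hi.trans hj.symm
  · exact absurd ⟨j, h.symm⟩ hb
  · exact absurd ⟨i, h⟩ hb
  · exact hf h

theorem exists_fin_linearIndependent_comp {K V ι : Type*} [DivisionRing K] [AddCommGroup V]
    [Module K V] [Finite ι] (v : ι → V) :
    ∃ (k : ℕ) (f : Fin k → ι), Injective f ∧
      Submodule.span K (Set.range (v ∘ f)) = Submodule.span K (Set.range v) ∧
      LinearIndependent K (v ∘ f) := by
  obtain ⟨κ, a, ha, hspan, hli⟩ := exists_linearIndependent' K v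
  have : Finite κ := Finite.of_injective a ha
  let e := (Finite.equivFin κ).symm
  refine ⟨Nat.card κ, a ∘ e, ha.comp e.injective, ?_, hli.comp _ e.injective⟩
  rwa [← comp_assoc, EquivLike.range_comp]

namespace Matrix

variable {K : Type*} [Field K]

theorem cramer_mulVec {R n : Type*} [CommRing R] [Fintype n] [DecidableEq n]
    (A : Matrix n n R) (c : n → R) : cramer A (A *ᵥ c) = A.det • c := by
  rw [cramer_eq_adjugate_mulVec, mulVec_mulVec, adjugate_mul, smul_mulVec, one_mulVec]

theorem eq_det_updateCol_div_det_of_mulVec_eq {n : Type*} [Fintype n] [DecidableEq n]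
    {N : Matrix n n K} (hN : N.det ≠ 0) {c y : n → K} (h : N *ᵥ c = y) (l : n) :
    c l = (N.updateCol l y).det / N.det := by
  rw [← cramer_apply, ← h, cramer_mulVec, Pi.smul_apply, smul_eq_mul, mul_div_cancel_left₀ _ hN]

theorem mulVec_extend_zero {R m n κ : Type*} [CommSemiring R] [Fintype n] [Fintype κ]
    (A : Matrix m n R) {f : κ → n} (hf : Injective f) (c : κ → R) : A *ᵥ extend f c 0 = A.submatrix id f *ᵥ c := by
  ext i
  refine (Fintype.sum_of_injective f hf _ _ (fun j hj => ?_) (fun l => ?_)).symm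
  · simp [extend_apply' _ _ _ hj]
  · simp [hf.extend_apply]

theorem exists_injective_isUnit_submatrix_of_linearIndependent_col {m n : Type*} [Fintype m]
    [Fintype n] [DecidableEq n] {B : Matrix m n K} (hB : LinearIndependent K B.col) :
    ∃ r : n → m, Injective r ∧ IsUnit (B.submatrix r id) := by
  have hrank : B.rank = Fintype.card n := by
    rw [← rank_transpose]; exact hB.rank_matrix
  have hspan : Submodule.span K (Set.range B.row) = ⊤ := by
    apply Submodule.eq_top_of_finrank_eq
    rw [← rank_eq_finrank_span_row, hrank, Module.finrank_fintype_fun_eq_card]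
  obtain ⟨κ, a, ha, hspan', hli⟩ := exists_linearIndependent' K B.row
  let basis := Module.Basis.mk hli (by rw [hspan', hspan])
  let e := basis.indexEquiv (Pi.basisFun K n)
  refine ⟨a ∘ e.symm, ha.comp e.symm.injective, ?_⟩
  rw [← linearIndependent_rows_iff_isUnit]
  exact hli.comp _ e.symm.injective

theorem exists_linearIndependent_col_submatrix_mulVec_eq {m n : Type*} [Fintype n]
    (A : Matrix m n K) {b : m → K} (hb : ∃ x, A *ᵥ x = b) :
    ∃ (k : ℕ) (cI : Fin k → n), Injective cI ∧ LinearIndependent K (A.submatrix id cI).col ∧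
      ∃ c, A.submatrix id cI *ᵥ c = b := by
  obtain ⟨k, cI, hcI, hspan, hli⟩ := exists_fin_linearIndependent_comp (K := K) A.col
  refine ⟨k, cI, hcI, hli, ?_⟩
  have hcol : (A.submatrix id cI).col = A.col ∘ cI := rfl
  have hb' : b ∈ Submodule.span K (Set.range (A.submatrix id cI).col) := by
    rwa [hcol, hspan, ← range_mulVecLin]
  rwa [← range_mulVecLin] at hb'

end Matrix

section augMat

variable {K : Type*} [Field K] {n m : ℕ} (A : Matrix (Fin n) (Fin m) K) (b : Fin n → K)

theorem augMat_submatrix_castSucc {κ ι : Type*} (r : κ → Fin n) (c : ι → Fin m) :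
    (augMat A b).submatrix r (Fin.castSucc ∘ c) = A.submatrix r c := by
  ext p q
  simp [augMat]

theorem augMat_submatrix_update_last {κ ι : Type*} [DecidableEq ι] (r : κ → Fin n) (c : ι → Fin m)
    (l : ι) :
    (augMat A b).submatrix r (update (Fin.castSucc ∘ c) l (Fin.last m)) =
      (A.submatrix r c).updateCol l (b ∘ r) := by
  ext p q
  rcases eq_or_ne q l with rfl | hq
  · simp [augMat]
  · simp [augMat, hq]

end augMat

/-- If the linear system `Ax = b` has a solution, then it has a solution in which each
coordinate is either `0` or a quotient `det M_i / det N` of minors of the augmented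
matrix `[A | b]`. -/
theorem cramer_general {K : Type*} [Field K] {n m : ℕ}
    (A : Matrix (Fin n) (Fin m) K) (b : Fin n → K)
    (hsol : ∃ x : Fin m → K, A.mulVec x = b) :
    ∃ x : Fin m → K, A.mulVec x = b ∧
      ∃ (k : ℕ) (rN : Fin k → Fin n) (cN : Fin k → Fin (m + 1)),
        Function.Injective rN ∧ Function.Injective cN ∧
        ∀ i : Fin m, x i = 0 ∨
          ∃ (rM : Fin k → Fin n) (cM : Fin k → Fin (m + 1)),
            Function.Injective rM ∧ Function.Injective cM ∧
            x i = ((augMat A b).submatrix rM cM).det / ((augMat A b).submatrix rN cN).det := by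
  obtain ⟨k, cI, hcI, hli, c, hc⟩ := exists_linearIndependent_col_submatrix_mulVec_eq A hsol
  obtain ⟨rI, hrI, hN⟩ := exists_injective_isUnit_submatrix_of_linearIndependent_col hli
  have hNc : A.submatrix rI cI *ᵥ c = b ∘ rI := funext fun p => congrFun hc (rI p)
  have hNdet : (A.submatrix rI cI).det ≠ 0 := ((isUnit_iff_isUnit_det _).mp hN).ne_zero
  have hcast : Injective (Fin.castSucc ∘ cI) := (Fin.castSucc_injective m).comp hcI
  refine ⟨extend cI c 0, by rw [mulVec_extend_zero A hcI]; exact hc,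
    k, rI, Fin.castSucc ∘ cI, hrI, hcast, fun i => ?_⟩
  by_cases hi : ∃ l, cI l = i
  · obtain ⟨l, rfl⟩ := hi
    refine .inr ⟨rI, update (Fin.castSucc ∘ cI) l (Fin.last m), hrI,
      hcast.update_of_notMem_range (fun ⟨j, hj⟩ => (Fin.castSucc_lt_last (cI j)).ne hj) l, ?_⟩
    rw [augMat_submatrix_update_last, augMat_submatrix_castSucc, hcI.extend_apply]
    exact eq_det_updateCol_div_det_of_mulVec_eq hNdet hNc l
  · exact .inl (extend_apply' _ _ _ hi)
end

section
/- Let f, g ∈ Z[y] with d := deg f ≥ deg g =: e, H(f), H(g) ≤ h, and g monic. Write f = g·q + r with q, r ∈ Z[y] and deg r < e (such q, r exist and lie in Z[y] since g is monic). Then H(q), H(r) ≤ (d+1)·(h + 2·log(d+1)). -/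
/-- The logarithmic height of an integer `c`, i.e. `⌈log (|c| + 1)⌉`. -/
noncomputable def lheight (c : ℤ) : ℝ := ((⌈Real.log ((c.natAbs : ℝ) + 1)⌉ : ℤ) : ℝ)

lemma lheight_nonneg (c : ℤ) : 0 ≤ lheight c := by
  unfold lheight
  have h0 : (0:ℝ) ≤ (c.natAbs : ℝ) := Nat.cast_nonneg _
  have : (0:ℝ) ≤ Real.log ((c.natAbs : ℝ) + 1) := Real.log_nonneg (by linarith)
  exact_mod_cast Int.ceil_nonneg this

lemma abs_cast_eq_natAbs (c : ℤ) : |(c:ℝ)| = (c.natAbs : ℝ) := by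
  rw [Nat.cast_natAbs, Int.cast_abs]

lemma abs_add_one_le_exp {c : ℤ} {y : ℝ} (hc : lheight c ≤ y) :
    |(c:ℝ)| + 1 ≤ Real.exp y := by
  have h1 : Real.log ((c.natAbs:ℝ)+1) ≤ y := le_trans (Int.le_ceil _) hc
  have hpos : (0:ℝ) < (c.natAbs:ℝ)+1 := by positivity
  have h2 : ((c.natAbs:ℝ)+1) ≤ Real.exp y := by
    rw [← Real.exp_log hpos]; exact Real.exp_le_exp.mpr h1
  rw [abs_cast_eq_natAbs]; linarith

lemma lheight_le_add_one {c : ℤ} {y : ℝ} (hc : |(c:ℝ)| + 1 ≤ Real.exp y) :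
    lheight c ≤ y + 1 := by
  rw [abs_cast_eq_natAbs] at hc
  have hpos : (0:ℝ) < (c.natAbs:ℝ)+1 := by positivity
  have h1 : Real.log ((c.natAbs:ℝ)+1) ≤ y := by
    rw [← Real.log_exp y]; exact Real.log_le_log hpos hc
  have h2 := Int.ceil_lt_add_one (Real.log ((c.natAbs:ℝ)+1))
  unfold lheight
  linarith

set_option maxHeartbeats 1600000 in
/-- Height bound for division with remainder by a monic integer polynomial:
if `f = g·q + r` with `g` monic, `deg r < deg g`, `d = deg f ≥ deg g`, and all
coefficients of `f` and `g` have logarithmic height at most `h`, then every coefficient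
of `q` and of `r` has logarithmic height at most `(d+1)·(h + 2·log(d+1))`. -/
theorem lheight_divMod (f g q r : Polynomial ℤ) (d e : ℕ) (h : ℝ)
    (hd : f.natDegree = d) (he : g.natDegree = e) (hde : e ≤ d)
    (hg : g.Monic)
    (hhf : ∀ k, lheight (f.coeff k) ≤ h) (hhg : ∀ k, lheight (g.coeff k) ≤ h)
    (heq : f = g * q + r) (hr : r.degree < (e : WithBot ℕ)) :
    (∀ k, lheight (q.coeff k) ≤ (d + 1) * (h + 2 * Real.log (d + 1))) ∧
    (∀ k, lheight (r.coeff k) ≤ (d + 1) * (h + 2 * Real.log (d + 1))) := by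
  have hh0 : 0 ≤ h := le_trans (lheight_nonneg _) (hhf 0)
  set M : ℝ := Real.exp h with hMdef
  have hM1 : 1 ≤ M := Real.one_le_exp hh0
  have hf' : ∀ k, |(f.coeff k : ℝ)| + 1 ≤ M := fun k => abs_add_one_le_exp (hhf k)
  have hg' : ∀ k, |(g.coeff k : ℝ)| + 1 ≤ M := fun k => abs_add_one_le_exp (hhg k)
  set B : ℝ := (d+1) * M with hBdef
  have hdr0 : (0:ℝ) ≤ (d:ℝ) := Nat.cast_nonneg d
  have hB1 : 1 ≤ B := by rw [hBdef]; nlinarith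
  have hed : (e:ℝ) ≤ (d:ℝ) := by exact_mod_cast hde
  -- r has no coefficients from e on
  have hrz : ∀ k, e ≤ k → r.coeff k = 0 := by
    intro k hk
    apply Polynomial.coeff_eq_zero_of_degree_lt
    exact lt_of_lt_of_le hr (by exact_mod_cast hk)
  -- q has natDegree ≤ d - e
  have hqz : ∀ i, d - e < i → q.coeff i = 0 := by
    intro i hi
    by_cases hq0 : q = 0
    · simp [hq0]
    · apply Polynomial.coeff_eq_zero_of_natDegree_lt
      have hgq : g * q = f - r := by rw [heq]; ring
      have hrd : r.natDegree ≤ d :=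
        le_trans (Polynomial.natDegree_le_iff_degree_le.mpr hr.le) hde
      have h1 : (g*q).natDegree ≤ d := by
        rw [hgq]
        exact le_trans (Polynomial.natDegree_sub_le f r) (max_le (le_of_eq hd) hrd)
      rw [Polynomial.natDegree_mul hg.ne_zero hq0, he] at h1
      omega
  -- product coefficients
  have hmul : ∀ n, (g*q).coeff n = ∑ a ∈ Finset.range (n+1), g.coeff a * q.coeff (n - a) := by
    intro n
    rw [Polynomial.coeff_mul, Finset.Nat.sum_antidiagonal_eq_sum_range_succ_mk]
  -- recursive formula for coefficients of q
  have hqf : ∀ i, q.coeff i = f.coeff (e+i) - ∑ a ∈ Finset.range e, g.coeff a * q.coeff (e+i-a) := by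
    intro i
    have h1 : f.coeff (e+i) = (g*q).coeff (e+i) + r.coeff (e+i) := by
      rw [heq]; simp
    rw [hrz (e+i) (by omega), add_zero, hmul] at h1
    have h2 : ∑ a ∈ Finset.range (e+1), g.coeff a * q.coeff (e+i-a)
        = ∑ a ∈ Finset.range (e+i+1), g.coeff a * q.coeff (e+i-a) := by
      apply Finset.sum_subset (Finset.range_subset_range.2 (by omega))
      intro x hx hx'
      have hex : e < x := by
        simp only [Finset.mem_range] at hx hx'; omega
      rw [Polynomial.coeff_eq_zero_of_natDegree_lt (by omega : g.natDegree < x), zero_mul]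
    have h3 : ∑ a ∈ Finset.range (e+1), g.coeff a * q.coeff (e+i-a)
        = (∑ a ∈ Finset.range e, g.coeff a * q.coeff (e+i-a)) + g.coeff e * q.coeff i := by
      rw [Finset.sum_range_succ, show e + i - e = i from by omega]
    have h4 : g.coeff e = 1 := by
      have := hg.coeff_natDegree
      rwa [he] at this
    rw [← h2, h3, h4, one_mul] at h1
    linarith
  -- the inductive coefficient bound for q
  have claim : ∀ t, ∀ i, d - e < i + t → |(q.coeff i : ℝ)| ≤ (M-1) * B ^ (d - e - i) := by
    intro t
    induction t with
    | zero =>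
      intro i hi
      rw [hqz i (by omega)]
      simp only [Int.cast_zero, abs_zero]
      have hBp : (1:ℝ) ≤ B ^ (d-e-i) := one_le_pow₀ hB1
      exact mul_nonneg (by linarith) (by linarith)
    | succ t ih =>
      intro i hi
      by_cases hcase : d - e < i
      · rw [hqz i hcase]
        simp only [Int.cast_zero, abs_zero]
        have hBp : (1:ℝ) ≤ B ^ (d-e-i) := one_le_pow₀ hB1
        exact mul_nonneg (by linarith) (by linarith)
      · by_cases htop : d - e ≤ i
        · -- i = d - e : all terms in the sum vanish
          have hsum0 : ∑ a ∈ Finset.range e, g.coeff a * q.coeff (e+i-a) = 0 := by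
            apply Finset.sum_eq_zero
            intro a ha
            simp only [Finset.mem_range] at ha
            rw [hqz (e+i-a) (by omega), mul_zero]
          rw [hqf i, hsum0, sub_zero]
          have h5 := hf' (e+i)
          have hBp : (1:ℝ) ≤ B ^ (d-e-i) := one_le_pow₀ hB1
          have h6 := mul_le_mul_of_nonneg_left hBp (by linarith : (0:ℝ) ≤ M - 1)
          calc |((f.coeff (e+i) : ℤ) : ℝ)| ≤ M - 1 := by linarith
          _ ≤ (M-1) * B ^ (d-e-i) := by linarith [h6]
        · -- i < d - e
          rw [hqf i]
          push_cast
          have hn : d - e - i = (d - e - (i+1)) + 1 := by omega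
          set m : ℕ := d - e - (i+1) with hmdef
          have hBm1 : (1:ℝ) ≤ B ^ m := one_le_pow₀ hB1
          have hterm : ∀ a ∈ Finset.range e,
              |((g.coeff a : ℝ) * (q.coeff (e+i-a) : ℝ))| ≤ M * ((M-1) * B ^ m) := by
            intro a ha
            simp only [Finset.mem_range] at ha
            rw [abs_mul]
            have h1 : |(g.coeff a:ℝ)| ≤ M := by
              have := hg' a; linarith
            have h2 : |(q.coeff (e+i-a):ℝ)| ≤ (M-1) * B ^ (d-e-(e+i-a)) :=
              ih (e+i-a) (by omega)
            have h3 : B ^ (d-e-(e+i-a)) ≤ B ^ m := pow_le_pow_right₀ hB1 (by omega)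
            have h3' := mul_le_mul_of_nonneg_left h3 (by linarith : (0:ℝ) ≤ M - 1)
            have h4 : |(q.coeff (e+i-a):ℝ)| ≤ (M-1) * B ^ m := by linarith
            exact mul_le_mul h1 h4 (abs_nonneg _) (by linarith)
          have hsum : |(∑ a ∈ Finset.range e, (g.coeff a : ℝ) * (q.coeff (e+i-a) : ℝ))|
              ≤ (e:ℝ) * (M * ((M-1) * B ^ m)) := by
            calc |(∑ a ∈ Finset.range e, (g.coeff a : ℝ) * (q.coeff (e+i-a) : ℝ))|
                ≤ ∑ a ∈ Finset.range e, |(g.coeff a : ℝ) * (q.coeff (e+i-a) : ℝ)| :=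
                  Finset.abs_sum_le_sum_abs _ _
            _ ≤ (Finset.range e).card • (M * ((M-1) * B ^ m)) :=
                  Finset.sum_le_card_nsmul _ _ _ hterm
            _ = (e:ℝ) * (M * ((M-1) * B ^ m)) := by
                  rw [Finset.card_range, nsmul_eq_mul]
          have h5 := hf' (e+i)
          have habs : |(f.coeff (e+i):ℝ) - (∑ a ∈ Finset.range e, (g.coeff a : ℝ) * (q.coeff (e+i-a) : ℝ))|
              ≤ |(f.coeff (e+i):ℝ)| + |(∑ a ∈ Finset.range e, (g.coeff a : ℝ) * (q.coeff (e+i-a) : ℝ))| :=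
            abs_sub _ _
          rw [hn]
          have hBM : (1:ℝ) ≤ B ^ m * M := by nlinarith
          have ha1 : (M-1) ≤ (M-1) * (B^m * M) := by
            nlinarith [mul_nonneg (by linarith : (0:ℝ) ≤ M - 1) (by linarith : (0:ℝ) ≤ B^m * M - 1)]
          have ha2 : (e:ℝ) * (M * ((M-1) * B^m)) ≤ (d:ℝ) * (M * ((M-1) * B^m)) :=
            mul_le_mul_of_nonneg_right hed (by nlinarith)
          have ha3 : (M-1)*(B^m*M) + (d:ℝ)*(M*((M-1)*B^m)) = (M-1)*B^(m+1) := by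
            rw [pow_succ, hBdef]; ring
          calc |(f.coeff (e+i):ℝ) - _| ≤ _ := habs
          _ ≤ (M-1) + (e:ℝ) * (M * ((M-1) * B ^ m)) := by linarith
          _ ≤ (M-1) * B ^ (m+1) := by linarith
  -- uniform bounds
  have hQ : ∀ i, |(q.coeff i:ℝ)| + 1 ≤ M * B ^ (d-e) := by
    intro i
    have h1 := claim (d+1) i (by omega)
    have h2 : B ^ (d-e-i) ≤ B ^ (d-e) := pow_le_pow_right₀ hB1 (by omega)
    have h2' := mul_le_mul_of_nonneg_left h2 (by linarith : (0:ℝ) ≤ M - 1)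
    have h3 : (1:ℝ) ≤ B ^ (d-e) := one_le_pow₀ hB1
    nlinarith
  have hR : ∀ k, |(r.coeff k:ℝ)| + 1 ≤ M * B ^ (d-e+1) := by
    intro k
    have h3 : (1:ℝ) ≤ B ^ (d-e) := one_le_pow₀ hB1
    by_cases hke : e ≤ k
    · rw [hrz k hke]
      simp only [Int.cast_zero, abs_zero, zero_add]
      have hBB : (1:ℝ) ≤ B * B^(d-e) := by nlinarith
      have : B ^ (d-e+1) = B * B ^ (d-e) := by rw [pow_succ]; ring
      rw [this]; nlinarith
    · push_neg at hke
      have h1 : r.coeff k = f.coeff k - ∑ a ∈ Finset.range (k+1), g.coeff a * q.coeff (k-a) := by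
        have : f.coeff k = (g*q).coeff k + r.coeff k := by rw [heq]; simp
        rw [hmul] at this
        linarith
      rw [h1]
      push_cast
      have hterm : ∀ a ∈ Finset.range (k+1),
          |((g.coeff a : ℝ) * (q.coeff (k-a) : ℝ))| ≤ M * (M * B ^ (d-e)) := by
        intro a _
        rw [abs_mul]
        have hga : |(g.coeff a:ℝ)| ≤ M := by have := hg' a; linarith
        have hqa : |(q.coeff (k-a):ℝ)| ≤ M * B ^ (d-e) := by
          have := hQ (k-a); linarith
        exact mul_le_mul hga hqa (abs_nonneg _) (by linarith)
      have hsum : |(∑ a ∈ Finset.range (k+1), (g.coeff a : ℝ) * (q.coeff (k-a) : ℝ))|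
          ≤ ((k:ℝ)+1) * (M * (M * B ^ (d-e))) := by
        calc |(∑ a ∈ Finset.range (k+1), (g.coeff a : ℝ) * (q.coeff (k-a) : ℝ))|
            ≤ ∑ a ∈ Finset.range (k+1), |(g.coeff a : ℝ) * (q.coeff (k-a) : ℝ)| :=
              Finset.abs_sum_le_sum_abs _ _
        _ ≤ (Finset.range (k+1)).card • (M * (M * B ^ (d-e))) :=
              Finset.sum_le_card_nsmul _ _ _ hterm
        _ = ((k:ℝ)+1) * (M * (M * B ^ (d-e))) := by
              rw [Finset.card_range, nsmul_eq_mul]; push_cast; ring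
      have h5 := hf' k
      have habs : |(f.coeff k:ℝ) - (∑ a ∈ Finset.range (k+1), (g.coeff a : ℝ) * (q.coeff (k-a) : ℝ))|
          ≤ |(f.coeff k:ℝ)| + |(∑ a ∈ Finset.range (k+1), (g.coeff a : ℝ) * (q.coeff (k-a) : ℝ))| :=
        abs_sub _ _
      have hke' : ((k:ℝ)+1) ≤ (e:ℝ) := by exact_mod_cast hke
      have hMX : (1:ℝ) ≤ M * B^(d-e) := by nlinarith
      have hA : M ≤ M * (M * B^(d-e)) := by nlinarith
      have hB2 : ((k:ℝ)+1) * (M*(M*B^(d-e))) ≤ (d:ℝ) * (M*(M*B^(d-e))) :=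
        mul_le_mul_of_nonneg_right (by linarith) (by nlinarith)
      have h4 : M * B^(d-e+1) = M*(M*B^(d-e)) + (d:ℝ)*(M*(M*B^(d-e))) := by
        rw [pow_succ, hBdef]; ring
      linarith [habs, hsum, hB2, hA, h4, h5]
  -- now the final numeric step
  by_cases hd0 : d = 0
  · -- then e = 0, g = 1, r = 0, q = f
    subst hd0
    have he0 : e = 0 := by omega
    have hr0 : r = 0 := by
      rw [he0] at hr
      exact Polynomial.degree_eq_bot.mp (Nat.WithBot.lt_zero_iff.mp (by simpa using hr))
    have hg1 : g = 1 := hg.natDegree_eq_zero.mp (he.trans he0)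
    have hqeqf : q = f := by
      rw [heq, hg1, hr0, one_mul, add_zero]
    constructor
    · intro k
      rw [hqeqf]
      have := hhf k
      norm_num
      linarith
    · intro k
      rw [hr0]
      simp only [Polynomial.coeff_zero]
      have h0 : lheight 0 = 0 := by
        unfold lheight
        norm_num
      rw [h0]
      norm_num
      linarith
  · -- d ≥ 1
    have hd1 : 1 ≤ d := by omega
    have hdr : (1:ℝ) ≤ (d:ℝ) := by exact_mod_cast hd1
    have hlog2 : (0.6931471803 : ℝ) < Real.log 2 := Real.log_two_gt_d9
    have hlogd : Real.log 2 ≤ Real.log ((d:ℝ)+1) := by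
      apply Real.log_le_log (by norm_num)
      linarith
    have hlogd0 : (0:ℝ) ≤ Real.log ((d:ℝ)+1) := by linarith
    -- key: any c with |c|+1 ≤ M * B^n, n ≤ d, satisfies the bound
    have key : ∀ c : ℤ, ∀ n : ℕ, n ≤ d → |(c:ℝ)| + 1 ≤ M * B ^ n →
        lheight c ≤ (d + 1) * (h + 2 * Real.log (d + 1)) := by
      intro c n hn hc
      have hBn : B ^ n ≤ B ^ d := pow_le_pow_right₀ hB1 hn
      have hM0 : (0:ℝ) < M := by linarith
      have hcd : |(c:ℝ)| + 1 ≤ M * B ^ d := by nlinarith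
      -- M * B^d = exp(h + d (log(d+1) + h))
      have hBexp : B = Real.exp (Real.log ((d:ℝ)+1) + h) := by
        rw [Real.exp_add, hBdef, hMdef, Real.exp_log (by positivity)]
      have hMB : M * B ^ d = Real.exp (h + (d:ℝ) * (Real.log ((d:ℝ)+1) + h)) := by
        rw [hBexp, ← Real.exp_nat_mul, hMdef, ← Real.exp_add]
      rw [hMB] at hcd
      have hfin := lheight_le_add_one hcd
      nlinarith [hfin, mul_nonneg (by linarith : (0:ℝ) ≤ (d:ℝ) - 1) hlogd0]
    constructor
    · intro k
      exact key (q.coeff k) (d-e) (by omega) (hQ k)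
    · intro k
      by_cases he0 : e = 0
      · have hz : r.coeff k = 0 := hrz k (by omega)
        rw [hz]
        have h0 : lheight 0 = 0 := by unfold lheight; norm_num
        rw [h0]
        have : (0:ℝ) ≤ ((d:ℝ)+1) * (h + 2 * Real.log ((d:ℝ)+1)) := by
          apply mul_nonneg (by positivity)
          nlinarith
        exact_mod_cast this
      · exact key (r.coeff k) (d-e+1) (by omega) (hR k)
end

section
/- Let q ∈ Z[z] be a monic polynomial of degree e, and let f ∈ Z[x_1,...,x_n][z] be a polynomial with deg_z f = d ≥ e. Suppose H(f), H(q) ≤ h. Then H(f mod q) ≤ (d+1)·(h + 2·log(d+1)), where f mod q denotes the remainder of f upon division by q with respect to the variable z. -/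
lemma lheight_le_exp {c : ℤ} {h : ℝ} (hc : lheight c ≤ h) :
    ((c.natAbs : ℝ) + 1) ≤ Real.exp h := by
  have h1 : Real.log ((c.natAbs : ℝ) + 1) ≤ h :=
    le_trans (Int.le_ceil _) hc
  have hx : (0 : ℝ) < (c.natAbs : ℝ) + 1 := by positivity
  calc ((c.natAbs : ℝ) + 1) = Real.exp (Real.log ((c.natAbs : ℝ) + 1)) :=
        (Real.exp_log hx).symm
    _ ≤ Real.exp h := Real.exp_le_exp.mpr h1

lemma one_le_lheight_one : (1 : ℝ) ≤ lheight 1 := by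
  unfold lheight
  have h2 : (0 : ℝ) < Real.log (((1 : ℤ).natAbs : ℝ) + 1) := by
    norm_num
    exact Real.log_pos (by norm_num)
  have := Int.ceil_pos.mpr h2
  exact_mod_cast this

/-- Key induction: bound on the coefficients of the remainder after division by a
monic polynomial of degree `e ≥ 1`. -/
lemma key_modByMonic_bound {n : ℕ} (q : Polynomial ℤ) (hq : q.Monic) (e : ℕ)
    (hqe : q.natDegree = e) (he : 1 ≤ e) (Q : ℝ) (hQ1 : 1 ≤ Q)
    (hQ : ∀ i, ((q.coeff i).natAbs : ℝ) + 1 ≤ Q) :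
    ∀ m : ℕ, ∀ f : Polynomial (MvPolynomial (Fin n) ℤ), f.natDegree ≤ m →
      ∀ C : ℝ, 1 ≤ C → (∀ k mon, ((((f.coeff k).coeff mon).natAbs : ℝ) + 1 ≤ C)) →
      ∀ k mon,
        ((((f %ₘ q.map (Int.castRingHom (MvPolynomial (Fin n) ℤ))).coeff k).coeff
            mon).natAbs : ℝ) + 1 ≤ C * Q ^ (m + 1 - e) := by
  set R := MvPolynomial (Fin n) ℤ
  set φ := Int.castRingHom R with hφ
  have hq' : (q.map φ).Monic := hq.map φ
  have hq'deg : (q.map φ).natDegree = e := by rw [hq.natDegree_map, hqe]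
  have hq'0 : q.map φ ≠ 0 := hq'.ne_zero
  -- coefficients of q.map φ
  have hq'c : ∀ j mon, (((q.map φ).coeff j).coeff mon).natAbs ≤ (q.coeff j).natAbs := by
    intro j mon
    rw [Polynomial.coeff_map]
    have hc : φ (q.coeff j) = MvPolynomial.C (q.coeff j) := by
      simp [hφ]
    rw [hc, MvPolynomial.coeff_C]
    split <;> simp
  -- a helper for the "degree < e" situation
  have hsmall : ∀ f : Polynomial R, f.natDegree < e → f %ₘ q.map φ = f := by
    intro f hfe
    refine (Polynomial.modByMonic_eq_self_iff hq').mpr ?_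
    have h1 : f.degree ≤ (f.natDegree : WithBot ℕ) := Polynomial.degree_le_natDegree
    have h2 : (q.map φ).degree = (e : WithBot ℕ) := by
      rw [Polynomial.degree_eq_natDegree hq'0, hq'deg]
    rw [h2]
    refine lt_of_le_of_lt h1 ?_
    exact_mod_cast hfe
  intro m
  induction m with
  | zero =>
    intro f hfm C hC1 hf k mon
    have hfe : f.natDegree < e := lt_of_le_of_lt hfm he
    rw [hsmall f hfe]
    have hpow : (1 : ℝ) ≤ Q ^ (0 + 1 - e) := one_le_pow₀ hQ1
    calc (((((f.coeff k).coeff mon).natAbs : ℝ)) + 1) ≤ C := hf k mon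
      _ = C * 1 := (mul_one C).symm
      _ ≤ C * Q ^ (0 + 1 - e) := by
          exact mul_le_mul_of_nonneg_left hpow (le_trans zero_le_one hC1)
  | succ m ih =>
    intro f hfm C hC1 hf k mon
    by_cases hfe : f.natDegree < e
    · rw [hsmall f hfe]
      have hpow : (1 : ℝ) ≤ Q ^ (m + 1 + 1 - e) := one_le_pow₀ hQ1
      calc (((((f.coeff k).coeff mon).natAbs : ℝ)) + 1) ≤ C := hf k mon
        _ = C * 1 := (mul_one C).symm
        _ ≤ C * Q ^ (m + 1 + 1 - e) := by
            exact mul_le_mul_of_nonneg_left hpow (le_trans zero_le_one hC1)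
    · push_neg at hfe
      have hf0 : f ≠ 0 := by
        intro h0
        rw [h0, Polynomial.natDegree_zero] at hfe
        omega
      set s := f.natDegree - e with hs
      set a := f.leadingCoeff with ha
      have ha0 : a ≠ 0 := Polynomial.leadingCoeff_ne_zero.mpr hf0
      set t : Polynomial R := q.map φ * (Polynomial.C a * Polynomial.X ^ s) with ht
      set g : Polynomial R := f - t with hg
      have hmod : g %ₘ q.map φ = f %ₘ q.map φ := by
        rw [hg, Polynomial.sub_modByMonic, ht, Polynomial.self_mul_modByMonic hq',
          sub_zero]
      -- degree facts
      have ht0 : t ≠ 0 := by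
        rw [ht]
        exact mul_ne_zero hq'0 (mul_ne_zero (by simpa using ha0) (pow_ne_zero _ Polynomial.X_ne_zero))
      have htdeg : t.natDegree = f.natDegree := by
        rw [ht, Polynomial.natDegree_mul hq'0
          (mul_ne_zero (by simpa using ha0) (pow_ne_zero _ Polynomial.X_ne_zero)), hq'deg,
          Polynomial.natDegree_C_mul_X_pow s a ha0]
        omega
      have htlc : t.leadingCoeff = a := by
        rw [ht, Polynomial.leadingCoeff_mul, hq'.leadingCoeff,
          Polynomial.leadingCoeff_C_mul_X_pow, one_mul]
      have hdlt : g.degree < f.degree := by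
        refine Polynomial.degree_sub_lt ?_ hf0 htlc.symm
        rw [Polynomial.degree_eq_natDegree hf0, Polynomial.degree_eq_natDegree ht0, htdeg]
      have hgdeg : g.natDegree ≤ m := by
        by_cases hg0 : g = 0
        · rw [hg0, Polynomial.natDegree_zero]; omega
        · have := Polynomial.natDegree_lt_natDegree hg0 hdlt
          omega
      -- coefficient bound for g
      have hgc : ∀ k mon, (((g.coeff k).coeff mon).natAbs : ℝ) + 1 ≤ C * Q := by
        intro k mon
        have htc : t.coeff k = a * (if s ≤ k then (q.map φ).coeff (k - s) else 0) := by
          rw [ht]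
          have : q.map φ * (Polynomial.C a * Polynomial.X ^ s)
              = Polynomial.C a * (q.map φ * Polynomial.X ^ s) := by ring
          rw [this, Polynomial.coeff_C_mul, Polynomial.coeff_mul_X_pow']
        by_cases hsk : s ≤ k
        · rw [if_pos hsk] at htc
          have hcoeff : (g.coeff k).coeff mon
              = (f.coeff k).coeff mon - (q.coeff (k - s)) * a.coeff mon := by
            rw [hg, Polynomial.coeff_sub, htc, MvPolynomial.coeff_sub]
            congr 1
            rw [Polynomial.coeff_map]
            have hc : φ (q.coeff (k - s)) = MvPolynomial.C (q.coeff (k - s)) := by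
              simp [hφ]
            rw [hc, mul_comm, MvPolynomial.coeff_C_mul]
          set x := (f.coeff k).coeff mon
          set y := a.coeff mon
          set c := q.coeff (k - s)
          have hnat : (x - c * y).natAbs ≤ x.natAbs + c.natAbs * y.natAbs := by
            refine le_trans (Int.natAbs_sub_le _ _) ?_
            rw [Int.natAbs_mul]
          have hna : ((x - c * y).natAbs : ℝ) ≤ (x.natAbs : ℝ) + (c.natAbs : ℝ) * (y.natAbs : ℝ) := by
            exact_mod_cast hnat
          have hx : ((x.natAbs : ℝ)) + 1 ≤ C := hf k mon
          have hy : ((y.natAbs : ℝ)) + 1 ≤ C := by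
            have h1 := hf f.natDegree mon
            rw [Polynomial.coeff_natDegree] at h1
            exact h1
          have hcb : ((c.natAbs : ℝ)) + 1 ≤ Q := hQ (k - s)
          rw [hcoeff]
          have h0x : (0:ℝ) ≤ (x.natAbs : ℝ) := by positivity
          have h0y : (0:ℝ) ≤ (y.natAbs : ℝ) := by positivity
          have h0c : (0:ℝ) ≤ (c.natAbs : ℝ) := by positivity
          nlinarith [hna, hx, hy, hcb, h0x, h0y, h0c]
        · rw [if_neg hsk, mul_zero] at htc
          have hcoeff : g.coeff k = f.coeff k := by
            rw [hg, Polynomial.coeff_sub, htc, sub_zero]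
          rw [hcoeff]
          calc (((f.coeff k).coeff mon).natAbs : ℝ) + 1 ≤ C := hf k mon
            _ = C * 1 := (mul_one C).symm
            _ ≤ C * Q := mul_le_mul_of_nonneg_left hQ1 (le_trans zero_le_one hC1)
      have hCQ1 : (1 : ℝ) ≤ C * Q := le_trans hC1 (by nlinarith)
      have hres := ih g hgdeg (C * Q) hCQ1 hgc k mon
      rw [hmod] at hres
      have hexp : m + 1 + 1 - e = (m + 1 - e) + 1 := by omega
      rw [hexp, pow_succ]
      calc ((((f %ₘ q.map φ).coeff k).coeff mon).natAbs : ℝ) + 1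
          ≤ C * Q * Q ^ (m + 1 - e) := hres
        _ = C * (Q ^ (m + 1 - e) * Q) := by ring

/-- Height bound for reduction modulo a monic polynomial: if `q ∈ ℤ[z]` is monic of
degree `e`, `f ∈ ℤ[x_1, …, x_n][z]` has `z`-degree `d ≥ e`, and all (integer)
coefficients of `f` and `q` have logarithmic height at most `h`, then every coefficient
of `f mod q` has logarithmic height at most `(d+1)·(h + 2·log(d+1))`. -/
theorem lheight_modByMonic {n : ℕ} (q : Polynomial ℤ)
    (f : Polynomial (MvPolynomial (Fin n) ℤ)) (e d : ℕ) (h : ℝ)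
    (hq : q.Monic) (hqe : q.natDegree = e) (hfd : f.natDegree = d) (hed : e ≤ d)
    (hhq : ∀ k, lheight (q.coeff k) ≤ h)
    (hhf : ∀ k mon, lheight ((f.coeff k).coeff mon) ≤ h) :
    ∀ k mon,
      lheight (((f %ₘ (q.map (Int.castRingHom (MvPolynomial (Fin n) ℤ)))).coeff k).coeff mon)
        ≤ (d + 1) * (h + 2 * Real.log (d + 1)) := by
  intro k mon
  have hlc : q.coeff e = 1 := by rw [← hqe]; exact hq.coeff_natDegree
  have h1 : (1 : ℝ) ≤ h := by
    have h2 := hhq e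
    rw [hlc] at h2
    exact le_trans one_le_lheight_one h2
  by_cases he0 : e = 0
  · have hq1 : q = 1 := hq.natDegree_eq_zero.mp (by omega)
    rw [hq1, Polynomial.map_one, Polynomial.modByMonic_one]
    have hz : lheight 0 = 0 := by
      unfold lheight
      norm_num
    simp only [Polynomial.coeff_zero, MvPolynomial.coeff_zero, hz]
    have hlognn : (0 : ℝ) ≤ Real.log ((d : ℝ) + 1) := Real.log_nonneg (by have := Nat.cast_nonneg (α := ℝ) d; linarith)
    nlinarith [hlognn, h1, Nat.cast_nonneg (α := ℝ) d]
  · have he1 : 1 ≤ e := Nat.one_le_iff_ne_zero.mpr he0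
    have hh0 : (0 : ℝ) ≤ h := le_trans zero_le_one h1
    have hexp1 : (1 : ℝ) ≤ Real.exp h := by
      rw [show (1 : ℝ) = Real.exp 0 from (Real.exp_zero).symm]
      exact Real.exp_le_exp.mpr hh0
    have hb := key_modByMonic_bound q hq e hqe he1 (Real.exp h) hexp1
      (fun i => lheight_le_exp (hhq i)) d f (le_of_eq hfd) (Real.exp h) hexp1
      (fun k mon => lheight_le_exp (hhf k mon)) k mon
    set r := ((f %ₘ q.map (Int.castRingHom (MvPolynomial (Fin n) ℤ))).coeff k).coeff mon
      with hr
    have hpos : (0 : ℝ) < (r.natAbs : ℝ) + 1 := by positivity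
    have hlog : Real.log ((r.natAbs : ℝ) + 1) ≤ (((d + 1 - e : ℕ) : ℝ) + 1) * h := by
      rw [Real.log_le_iff_le_exp hpos]
      calc ((r.natAbs : ℝ) + 1) ≤ Real.exp h * Real.exp h ^ (d + 1 - e) := hb
        _ = Real.exp (h + ((d + 1 - e : ℕ) : ℝ) * h) := by
            rw [← Real.exp_nat_mul, ← Real.exp_add]
        _ = Real.exp ((((d + 1 - e : ℕ) : ℝ) + 1) * h) := by ring_nf
    have hceil : lheight r ≤ Real.log ((r.natAbs : ℝ) + 1) + 1 :=
      le_of_lt (Int.ceil_lt_add_one _)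
    have hcast : ((d + 1 - e : ℕ) : ℝ) ≤ (d : ℝ) := by
      exact_mod_cast Nat.cast_le.mpr (show d + 1 - e ≤ d by omega)
    have hd1 : 1 ≤ d := le_trans he1 hed
    have hlog2 : Real.log 2 ≤ Real.log ((d : ℝ) + 1) := by
      apply Real.log_le_log (by norm_num)
      have : (1 : ℝ) ≤ (d : ℝ) := by exact_mod_cast hd1
      linarith
    have hl2 : (0.6931471803 : ℝ) < Real.log 2 := Real.log_two_gt_d9
    have hd0 : (1 : ℝ) ≤ (d : ℝ) := by exact_mod_cast hd1
    nlinarith [hceil, hlog, hcast, hlog2, hl2, hd0, h1]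
end

section
/- Let δ be a nonzero element of the ring of integers O_F of a number field F, and let f ∈ (1/δ)·O_F[x] be a monic polynomial which factors as f = g·h in F[x] with g, h monic. Then g, h ∈ (1/δ)·O_F[x]. -/
/-!
If `f = g * h` with `h` monic, then for every finite place `v` of `F` the Gauss norm of `h` is at
least `1`, so by multiplicativity of the Gauss norm the coefficients of `g` are bounded in
`v`-adic absolute value by the Gauss norm of `f`, which is attained at a coefficient of `f`.
Hence `|δ gₖ|ᵥ ≤ 1` for all `v`, and an element of `F` that is `v`-integral for all finite
places `v` lies in `O_F`.
-/

open IsDedekindDomain HeightOneSpectrum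

namespace Polynomial

variable {R : Type*} [Ring R] {v : AbsoluteValue R ℝ} {c : ℝ}

theorem Monic.one_le_gaussNorm [Nontrivial R] {q : R[X]} (hq : q.Monic) (hc : 1 ≤ c) :
    1 ≤ q.gaussNorm v c :=
  calc 1 ≤ c ^ q.natDegree := one_le_pow₀ hc
    _ = v (q.coeff q.natDegree) * c ^ q.natDegree := by rw [hq.coeff_natDegree, v.map_one, one_mul]
    _ ≤ q.gaussNorm v c := q.le_gaussNorm v (zero_le_one.trans hc) _

theorem gaussNorm_le_gaussNorm_mul_of_monic [Nontrivial R] (hna : IsNonarchimedean v)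
    (hc : 1 ≤ c) (p : R[X]) {q : R[X]} (hq : q.Monic) :
    p.gaussNorm v c ≤ (p * q).gaussNorm v c := by
  rw [gaussNorm_mul hna (zero_lt_one.trans_le hc)]
  exact le_mul_of_one_le_right (p.gaussNorm_nonneg v (zero_le_one.trans hc))
    (hq.one_le_gaussNorm hc)

end Polynomial

namespace IsDedekindDomain

variable {R : Type*} [CommRing R] [IsDedekindDomain R] {K : Type*} [Field K] [Algebra R K]
  [IsFractionRing R K]

open Polynomial

theorem mem_range_of_forall_adicAbv_le_one {b : NNReal} (hb : 1 < b) {x : K}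
    (hx : ∀ v : HeightOneSpectrum R, v.adicAbv hb x ≤ 1) : x ∈ (algebraMap R K).range :=
  mem_integers_of_valuation_le_one K x fun v => by
    simpa [adicAbv, adicAbvDef, WithZeroMulInt.toNNReal_le_one_iff hb] using hx v

theorem algebraMap_mul_coeff_mem_range_of_mul_monic (δ : R) {p q : K[X]} (hq : q.Monic)
    (hpq : ∀ k, algebraMap R K δ * (p * q).coeff k ∈ (algebraMap R K).range) (k : ℕ) :
    algebraMap R K δ * p.coeff k ∈ (algebraMap R K).range := by
  have hb : (1 : NNReal) < 2 := one_lt_two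
  refine mem_range_of_forall_adicAbv_le_one hb fun v => ?_
  set abv := v.adicAbv hb (K := K)
  obtain ⟨i, hi⟩ := (p * q).exists_eq_gaussNorm abv 1
  obtain ⟨r, hr⟩ := hpq i
  calc abv (algebraMap R K δ * p.coeff k)
      = abv (algebraMap R K δ) * abv (p.coeff k) := abv.map_mul _ _
    _ ≤ abv (algebraMap R K δ) * p.gaussNorm abv 1 := by
      gcongr
      simpa using p.le_gaussNorm abv zero_le_one k
    _ ≤ abv (algebraMap R K δ) * (p * q).gaussNorm abv 1 := by
      gcongr
      exact gaussNorm_le_gaussNorm_mul_of_monic (v.isNonarchimedean_adicAbv hb) le_rfl p hq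
    _ = abv (algebraMap R K δ * (p * q).coeff i) := by rw [hi, one_pow, mul_one, abv.map_mul]
    _ ≤ 1 := hr ▸ v.adicAbv_coe_le_one hb r

end IsDedekindDomain

theorem gauss_lemma_monic_general {F : Type*} [Field F] [NumberField F]
    (δ : NumberField.RingOfIntegers F)
    (f g h : Polynomial F) (hg : g.Monic) (hh : h.Monic)
    (hfactor : f = g * h)
    (hcoeff : ∀ k, (δ : F) * f.coeff k ∈ (algebraMap (NumberField.RingOfIntegers F) F).range) :
    (∀ k, (δ : F) * g.coeff k ∈ (algebraMap (NumberField.RingOfIntegers F) F).range) ∧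
    (∀ k, (δ : F) * h.coeff k ∈ (algebraMap (NumberField.RingOfIntegers F) F).range) := by
  subst hfactor
  exact ⟨IsDedekindDomain.algebraMap_mul_coeff_mem_range_of_mul_monic δ hh hcoeff,
    IsDedekindDomain.algebraMap_mul_coeff_mem_range_of_mul_monic δ hg (mul_comm g h ▸ hcoeff)⟩

/-- Gauss's lemma for monic factorizations over the ring of integers of a number field:
if `δ ∈ O_F` is nonzero, `f` is a monic polynomial with coefficients in `(1/δ)·O_F`,
and `f = g·h` with `g, h` monic in `F[x]`, then `g` and `h` also have coefficients in
`(1/δ)·O_F`. -/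
theorem gauss_lemma_monic {F : Type*} [Field F] [NumberField F]
    (δ : NumberField.RingOfIntegers F) (hδ : δ ≠ 0)
    (f g h : Polynomial F) (hf : f.Monic) (hg : g.Monic) (hh : h.Monic)
    (hfactor : f = g * h)
    (hcoeff : ∀ k, (δ : F) * f.coeff k ∈ (algebraMap (NumberField.RingOfIntegers F) F).range) :
    (∀ k, (δ : F) * g.coeff k ∈ (algebraMap (NumberField.RingOfIntegers F) F).range) ∧
    (∀ k, (δ : F) * h.coeff k ∈ (algebraMap (NumberField.RingOfIntegers F) F).range) :=
  gauss_lemma_monic_general δ f g h hg hh hfactor hcoeff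
end

section
/- Let f_1, ..., f_m ∈ Z[x_1,...,x_n] be polynomials with no common zero over the algebraic closure of Q. Then there exists a nonzero integer a and polynomials g_1, ..., g_m ∈ Z[x_1,...,x_n] such that a = f_1·g_1 + ... + f_m·g_m. -/
/-!
Over `ℚ` the `f_i` generate the unit ideal: otherwise they lie in a maximal ideal `P`, the
residue field `ℚ[x]/P` is finite over `ℚ` by Zariski's lemma and so embeds into `ℚ̄`, and the
images of the variables give a common zero. Since `ℚ[x]` is the localization of `ℤ[x]` at the
nonzero integer constants, clearing denominators in `1 = ∑ f_i h_i` yields `a = ∑ f_i g_i`.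
-/

namespace MvPolynomial

variable {σ : Type*}

theorem zeroLocus_nonempty_of_ne_top {K L : Type*} [Field K] [Field L] [IsAlgClosed L]
    [Algebra K L] [Finite σ] {I : Ideal (MvPolynomial σ K)} (hI : I ≠ ⊤) :
    (zeroLocus L I).Nonempty := by
  obtain ⟨P, hP, hIP⟩ := Ideal.exists_le_maximal I hI
  let := Ideal.Quotient.field P
  have : Module.Finite K (MvPolynomial σ K ⧸ P) := finite_of_finite_type_of_isJacobsonRing K _
  let ψ : MvPolynomial σ K →ₐ[K] L := (IsAlgClosed.lift : _ →ₐ[K] L).comp (Ideal.Quotient.mkₐ K P)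
  refine ⟨ψ ∘ X, fun p hp => ?_⟩
  rw [← aeval_unique ψ]
  simp [ψ, Ideal.Quotient.eq_zero_iff_mem.2 (hIP hp)]

theorem exists_C_mem_of_map_eq_top {R K : Type*} [CommRing R] [Nontrivial R] [Field K]
    [Algebra R K] [IsFractionRing R K] {I : Ideal (MvPolynomial σ R)}
    (hI : I.map (map (algebraMap R K)) = ⊤) : ∃ a ≠ 0, C a ∈ I := by
  let := algebraMvPolynomial (σ := σ) (R := R) (S := K)
  have : IsLocalization ((nonZeroDivisors R).map (C (σ := σ))) (MvPolynomial σ K) :=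
    isLocalization _ _
  obtain ⟨⟨⟨p, hp⟩, ⟨_, a, ha, rfl⟩⟩, h⟩ :=
    (IsLocalization.mem_map_algebraMap_iff ((nonZeroDivisors R).map (C (σ := σ)))
      (MvPolynomial σ K)).mp (hI ▸ Submodule.mem_top : (1 : MvPolynomial σ K) ∈ I.map _)
  rw [one_mul] at h
  have hap : C a = p := map_injective _ (IsFractionRing.injective R K) h
  exact ⟨a, nonZeroDivisors.ne_zero ha, hap ▸ hp⟩

end MvPolynomial

open MvPolynomial

/-- Integral Nullstellensatz: if `f_1, …, f_m ∈ ℤ[x_1, …, x_n]` have no common zero over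
the algebraic closure of `ℚ`, then some nonzero integer `a` lies in the ideal generated
by the `f_i` over `ℤ`. -/
theorem integral_nullstellensatz {n m : ℕ} (f : Fin m → MvPolynomial (Fin n) ℤ)
    (hnz : ¬ ∃ x : Fin n → AlgebraicClosure ℚ, ∀ i, MvPolynomial.aeval x (f i) = 0) :
    ∃ a : ℤ, a ≠ 0 ∧ ∃ g : Fin m → MvPolynomial (Fin n) ℤ,
      (MvPolynomial.C a : MvPolynomial (Fin n) ℤ) = ∑ i, f i * g i := by
  set I := Ideal.span (Set.range f)
  have hI : I.map (map (algebraMap ℤ ℚ)) = ⊤ := by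
    by_contra h
    obtain ⟨x, hx⟩ := zeroLocus_nonempty_of_ne_top (L := AlgebraicClosure ℚ) h
    refine hnz ⟨x, fun i => ?_⟩
    rw [← aeval_map_algebraMap ℚ]
    exact hx _ (Ideal.mem_map_of_mem _ (Ideal.subset_span ⟨i, rfl⟩))
  obtain ⟨a, ha, haI⟩ := exists_C_mem_of_map_eq_top hI
  obtain ⟨g, hg⟩ := Ideal.mem_span_range_iff_exists_fun.mp haI
  exact ⟨a, ha, g, by simpa only [mul_comm] using hg.symm⟩
end

section
/- Let f_1, ..., f_m, f ∈ Z[x_1,...,x_n] and suppose f vanishes on every common zero of f_1, ..., f_m over the algebraic closure of Q. Then there exist a positive integer t, a nonzero integer a, and polynomials g_1, ..., g_m ∈ Z[x_1,...,x_n] such that a·f^t = f_1·g_1 + ... + f_m·g_m. -/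
/-!
The Nullstellensatz applies to ideals of `ℚ[x]` with zeros taken in `AlgebraicClosure ℚ`, so some
power `f ^ s` lies in the ideal of `ℚ[x]` generated by the `F i`. As `ℚ[x]` is the localization of
`ℤ[x]` at the nonzero integer constants, clearing denominators puts `a * f ^ s` in the ideal of
`ℤ[x]` for some nonzero integer `a`; one more factor of `f` makes the exponent positive.
-/

namespace MvPolynomial

variable {σ : Type*}

theorem exists_pow_mem_span_of_forall_aeval_eq_zero {ι k : Type*} (K : Type*) [Field k] [Field K]
    [Algebra k K] [IsAlgClosed K] [Finite σ] {f : MvPolynomial σ k} {F : ι → MvPolynomial σ k}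
    (hf : ∀ x : σ → K, (∀ i, aeval x (F i) = 0) → aeval x f = 0) :
    ∃ s : ℕ, f ^ s ∈ Ideal.span (Set.range F) := by
  rw [← Ideal.mem_radical_iff, ← vanishingIdeal_zeroLocus_eq_radical (K := K),
    mem_vanishingIdeal_iff]
  exact fun x hx ↦ hf x fun i ↦ hx _ (Ideal.subset_span ⟨i, rfl⟩)

section

attribute [local instance] algebraMvPolynomial

theorem exists_C_mul_mem_of_map_mem_map {R S : Type*} [CommRing R] [CommRing S] [Algebra R S]
    (M : Submonoid R) [IsLocalization M S] {I : Ideal (MvPolynomial σ R)}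
    {p : MvPolynomial σ R} (hp : map (algebraMap R S) p ∈ I.map (map (algebraMap R S))) :
    ∃ a ∈ M, C a * p ∈ I := by
  obtain ⟨_, ⟨a, ha, rfl⟩, hmem⟩ :=
    (IsLocalization.algebraMap_mem_map_algebraMap_iff (M.map C) (MvPolynomial σ S) I p).mp hp
  exact ⟨a, ha, hmem⟩

end

end MvPolynomial

open MvPolynomial

/-- Integral Nullstellensatz for radical membership: if `f` vanishes on every common
zero of `f_1, …, f_m` over the algebraic closure of `ℚ`, then `a·f^t` lies in the ideal
generated by the `f_i` over `ℤ` for some positive integer `t` and nonzero integer `a`. -/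
theorem integral_radical_membership {n m : ℕ}
    (f : MvPolynomial (Fin n) ℤ) (F : Fin m → MvPolynomial (Fin n) ℤ)
    (hvanish : ∀ x : Fin n → AlgebraicClosure ℚ,
      (∀ i, MvPolynomial.aeval x (F i) = 0) → MvPolynomial.aeval x f = 0) :
    ∃ t : ℕ, 0 < t ∧ ∃ a : ℤ, a ≠ 0 ∧ ∃ g : Fin m → MvPolynomial (Fin n) ℤ,
      (MvPolynomial.C a : MvPolynomial (Fin n) ℤ) * f ^ t = ∑ i, F i * g i := by
  let φ := map (σ := Fin n) (algebraMap ℤ ℚ)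
  obtain ⟨s, hs⟩ := exists_pow_mem_span_of_forall_aeval_eq_zero (AlgebraicClosure ℚ)
    (f := φ f) (F := φ ∘ F) (by simpa only [Function.comp_apply, φ, aeval_map_algebraMap])
  rw [← map_pow, Set.range_comp, ← Ideal.map_span] at hs
  obtain ⟨a, ha, hmem⟩ := exists_C_mul_mem_of_map_mem_map (nonZeroDivisors ℤ) hs
  obtain ⟨g, hg⟩ := Ideal.mem_span_range_iff_exists_fun.mp (Ideal.mul_mem_right f _ hmem)
  refine ⟨s + 1, s.succ_pos, a, nonZeroDivisors.ne_zero ha, g, ?_⟩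
  rw [pow_succ, ← mul_assoc, ← hg]
  simp only [mul_comm]
end
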